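/- arXiv:1810.00777 — 3 statements merged into one kernel-verified Lean document; each statement's English description precedes it below -/
import Mathlib

section
/- A feasible path departure vector h* is a dynamic user equilibrium (i.e., for every O-D pair (i,j) and every path p connecting (i,j), h*_p(t) > 0 implies Ψ_p(t,h*) = v_ij(h*) for almost every t) if and only if h* solves the variational inequality: for all feasible h, Σ_p ∫ Ψ_p(t,h*)(h_p(t) − h*_p(t)) dt ≥ 0. -/
/-!
If `h*` is an equilibrium, then `Ψ_p(·, h*) ≥ v` almost everywhere, with equality where
`h*_p > 0`; so for feasible `h` the variational sum is at least `∑_p v (∫ h_p - ∫ h*_p)`, which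
vanishes because `h` and `h*` meet the same demand on every O-D pair.

Conversely, let `q` be a path of the same O-D pair as `p` whose essential infimum attains `v`,
so that `B = {Ψ_q < v + ε}` has positive measure. Rerouting all the flow of `p` onto `q`, spread
uniformly over `B`, is feasible, and the variational inequality for it gives
`∫ (Ψ_p - v) h*_p ≤ ε ∫ h*_p`. Hence the nonnegative function `(Ψ_p - v) h*_p` vanishes almost
everywhere, which is the equilibrium condition.
-/

open MeasureTheory Set

theorem nonpos_of_forall_pos_le_mul {x m : ℝ} (hm : 0 ≤ m) (h : ∀ ε > 0, x ≤ ε * m) : x ≤ 0 := by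
  refine le_of_forall_pos_le_add fun ε hε => ?_
  calc x ≤ ε / (m + 1) * m := h _ (by positivity)
    _ ≤ 0 + ε := by
      rw [zero_add, div_mul_eq_mul_div, div_le_iff₀ (by positivity)]
      nlinarith

section Reroute

variable {ι α : Type*} [DecidableEq ι]

def reroute (h : ι → α → ℝ) (p q : ι) (a : α → ℝ) : ι → α → ℝ :=
  h + Pi.single q a - Pi.single p (h p)

theorem reroute_apply (h : ι → α → ℝ) (p q : ι) (a : α → ℝ) (r : ι) (t : α) :
    reroute h p q a r t =
      h r t + (Pi.single q a : ι → α → ℝ) r t - (Pi.single p (h p) : ι → α → ℝ) r t :=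
  rfl

end Reroute

section Measure

variable {α : Type*} [MeasurableSpace α] {μ : Measure α}

theorem measure_lt_essInf_add_ne_zero [NeZero μ] (f : α → ℝ) {ε : ℝ} (hε : 0 < ε) :
    μ {t | f t < essInf f μ + ε} ≠ 0 := by
  obtain ⟨n, hn⟩ : ∃ n : ℕ, μ {t | f t < n} ≠ 0 := by
    by_contra! h
    obtain ⟨t, ht⟩ := (ae_all_iff.2 fun n => measure_eq_zero_iff_ae_notMem.1 (h n)).exists
    obtain ⟨n, hn⟩ := exists_nat_gt (f t)
    exact ht n hn
  have hbdd : BddAbove {a : ℝ | μ {t | f t < a} = 0} :=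
    ⟨n, fun a ha => not_lt.1 fun hna => hn (measure_mono_null (fun t ht => lt_trans ht hna) ha)⟩
  intro h0
  have := le_csSup hbdd h0
  rw [← essInf_eq_sSup] at this
  linarith

theorem mul_integral_sub_le_integral_mul_sub [IsFiniteMeasure μ] {c f g : α → ℝ} {v : ℝ}
    (hc : MemLp c 2 μ) (hf : MemLp f 2 μ) (hg : MemLp g 2 μ) (hf₀ : 0 ≤ᵐ[μ] f)
    (hg₀ : 0 ≤ᵐ[μ] g) (hcv : ∀ᵐ t ∂μ, v ≤ c t) (hcf : ∀ᵐ t ∂μ, 0 < f t → c t = v) :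
    v * (∫ t, g t ∂μ - ∫ t, f t ∂μ) ≤ ∫ t, c t * (g t - f t) ∂μ := by
  have hc_mul : ∀ {k : α → ℝ}, MemLp k 2 μ → Integrable (fun t => c t * k t) μ :=
    fun hk => hc.integrable_mul hk
  have hcf_int : ∫ t, c t * f t ∂μ = v * ∫ t, f t ∂μ := by
    rw [← integral_const_mul]
    refine integral_congr_ae ?_
    filter_upwards [hcf, hf₀] with t hct hft
    rcases (hft : 0 ≤ f t).eq_or_lt with hft | hft
    · simp [← hft]
    · rw [hct hft]
  have hcg_int : v * ∫ t, g t ∂μ ≤ ∫ t, c t * g t ∂μ := by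
    rw [← integral_const_mul]
    refine integral_mono_ae ((hg.integrable one_le_two).const_mul v) (hc_mul hg) ?_
    filter_upwards [hcv, hg₀] with t hct hgt
    exact mul_le_mul_of_nonneg_right hct hgt
  calc v * (∫ t, g t ∂μ - ∫ t, f t ∂μ) ≤ ∫ t, c t * g t ∂μ - ∫ t, c t * f t ∂μ := by
        rw [hcf_int]; linarith
    _ = ∫ t, c t * (g t - f t) ∂μ := by
        rw [← integral_sub (hc_mul hg) (hc_mul hf)]
        simp only [mul_sub]

section PiSingle

variable {ι : Type*} [DecidableEq ι] {Ψ : ι → α → ℝ} {q : ι} {a : α → ℝ}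

theorem memLp_pi_single (ha : MemLp a 2 μ) (r : ι) : MemLp ((Pi.single q a : ι → α → ℝ) r) 2 μ := by
  rcases eq_or_ne r q with rfl | hr
  · simpa
  · simp [Pi.single_eq_of_ne hr, MemLp.zero]

theorem integral_pi_single (r : ι) :
    ∫ t, (Pi.single q a : ι → α → ℝ) r t ∂μ = (Pi.single q (∫ t, a t ∂μ) : ι → ℝ) r :=
  Pi.apply_single (fun _ (f : α → ℝ) => ∫ t, f t ∂μ) (fun _ => integral_zero _ _) q a r

theorem integrable_mul_pi_single (ha : Integrable (fun t => Ψ q t * a t) μ) (r : ι) :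
    Integrable (fun t => Ψ r t * (Pi.single q a : ι → α → ℝ) r t) μ := by
  rcases eq_or_ne r q with rfl | hr
  · simpa
  · simp [Pi.single_eq_of_ne hr]

theorem sum_integral_mul_pi_single [Fintype ι] :
    ∑ r, ∫ t, Ψ r t * (Pi.single q a : ι → α → ℝ) r t ∂μ = ∫ t, Ψ q t * a t ∂μ := by
  rw [Finset.sum_eq_single q (fun r _ hr => by simp [Pi.single_eq_of_ne hr]) (by simp)]
  simp

theorem sum_integral_mul_reroute_sub [Fintype ι] {h : ι → α → ℝ} {p : ι}
    (ha : Integrable (fun t => Ψ q t * a t) μ) (hp : Integrable (fun t => Ψ p t * h p t) μ) :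
    ∑ r, ∫ t, Ψ r t * (reroute h p q a r t - h r t) ∂μ =
      ∫ t, Ψ q t * a t ∂μ - ∫ t, Ψ p t * h p t ∂μ := by
  have hterm : ∀ r, ∫ t, Ψ r t * (reroute h p q a r t - h r t) ∂μ =
      ∫ t, Ψ r t * (Pi.single q a : ι → α → ℝ) r t ∂μ
        - ∫ t, Ψ r t * (Pi.single p (h p) : ι → α → ℝ) r t ∂μ := fun r => by
    rw [← integral_sub (integrable_mul_pi_single ha r) (integrable_mul_pi_single hp r)]
    congr 1 with t
    rw [reroute_apply]
    ring
  simp only [hterm, Finset.sum_sub_distrib, sum_integral_mul_pi_single]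

end PiSingle

section PathFlows

variable {ι W : Type*} [Fintype ι] [DecidableEq W] {od : ι → W} {Q : W → ℝ}

def pathFlows (od : ι → W) (Q : W → ℝ) (μ : Measure α) : Set (ι → α → ℝ) :=
  {h | (∀ p, MemLp (h p) 2 μ) ∧ (∀ p, 0 ≤ᵐ[μ] h p) ∧
    (∀ w, ∑ p ∈ Finset.univ.filter (fun p => od p = w), ∫ t, h p t ∂μ = Q w)}

theorem sum_mul_integral_sub_eq_zero [Fintype W] {h h' : ι → α → ℝ}
    (hh : h ∈ pathFlows od Q μ) (hh' : h' ∈ pathFlows od Q μ) (c : W → ℝ) :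
    ∑ p, c (od p) * (∫ t, h p t ∂μ - ∫ t, h' p t ∂μ) = 0 := by
  rw [← Finset.sum_fiberwise Finset.univ od]
  refine Finset.sum_eq_zero fun w _ => ?_
  rw [Finset.sum_congr rfl fun p hp => by rw [(Finset.mem_filter.1 hp).2], ← Finset.mul_sum,
    Finset.sum_sub_distrib, hh.2.2 w, hh'.2.2 w, sub_self, mul_zero]

theorem variationalInequality_of_isEquilibrium [Fintype W] [IsFiniteMeasure μ]
    {Ψ : ι → α → ℝ} (hΨ : ∀ p, MemLp (Ψ p) 2 μ) {v : W → ℝ}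
    (hv : ∀ p, ∀ᵐ t ∂μ, v (od p) ≤ Ψ p t) {hstar : ι → α → ℝ}
    (hstar_mem : hstar ∈ pathFlows od Q μ)
    (heq : ∀ p, ∀ᵐ t ∂μ, 0 < hstar p t → Ψ p t = v (od p))
    {h : ι → α → ℝ} (hh : h ∈ pathFlows od Q μ) :
    0 ≤ ∑ p, ∫ t, Ψ p t * (h p t - hstar p t) ∂μ :=
  calc 0 = ∑ p, v (od p) * (∫ t, h p t ∂μ - ∫ t, hstar p t ∂μ) :=
        (sum_mul_integral_sub_eq_zero hh hstar_mem v).symm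
    _ ≤ _ := Finset.sum_le_sum fun p _ =>
        mul_integral_sub_le_integral_mul_sub (hΨ p) (hstar_mem.1 p) (hh.1 p) (hstar_mem.2.1 p)
          (hh.2.1 p) (hv p) (heq p)

variable [DecidableEq ι]

theorem reroute_mem_pathFlows [IsFiniteMeasure μ]
    {h : ι → α → ℝ} (hh : h ∈ pathFlows od Q μ) {p q : ι} (hpq : od q = od p) {a : α → ℝ}
    (ha : MemLp a 2 μ) (ha₀ : 0 ≤ᵐ[μ] a) (ha_int : ∫ t, a t ∂μ = ∫ t, h p t ∂μ) :
    reroute h p q a ∈ pathFlows od Q μ := by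
  obtain ⟨hL2, hnonneg, hsum⟩ := hh
  refine ⟨fun r => ((hL2 r).add (memLp_pi_single ha r)).sub (memLp_pi_single (hL2 p) r),
    fun r => ?_, fun w => ?_⟩
  · filter_upwards [hnonneg r, ha₀] with t hr ha
    simp only [Pi.zero_apply] at hr ha ⊢
    rcases eq_or_ne r p with rfl | hrp
    · rcases eq_or_ne r q with rfl | hrq <;> simp [reroute_apply, *]
    · rcases eq_or_ne r q with rfl | hrq
      · simp [reroute_apply, Pi.single_eq_of_ne hrp]; positivity
      · simpa [reroute_apply, Pi.single_eq_of_ne hrp, Pi.single_eq_of_ne hrq] using hr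
  · have hi {f : α → ℝ} (hf : MemLp f 2 μ) : Integrable f μ := hf.integrable one_le_two
    have hint : ∀ r, ∫ t, reroute h p q a r t ∂μ =
        ∫ t, h r t ∂μ + (Pi.single q (∫ t, a t ∂μ) : ι → ℝ) r
          - (Pi.single p (∫ t, h p t ∂μ) : ι → ℝ) r := fun r => by
      rw [reroute, Pi.sub_apply, Pi.add_apply,
        integral_sub' (hi ((hL2 r).add (memLp_pi_single ha r))) (hi (memLp_pi_single (hL2 p) r)),
        integral_add' (hi (hL2 r)) (hi (memLp_pi_single ha r)), integral_pi_single,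
        integral_pi_single]
    simp only [hint, Finset.sum_sub_distrib, Finset.sum_add_distrib, Finset.sum_pi_single',
      Finset.mem_filter, Finset.mem_univ, true_and, hpq, hsum, ha_int]
    ring

theorem integral_mul_le_of_variationalInequality [IsFiniteMeasure μ] {Ψ : ι → α → ℝ}
    (hΨ : ∀ p, MemLp (Ψ p) 2 μ) {hstar : ι → α → ℝ} (hstar_mem : hstar ∈ pathFlows od Q μ)
    (hVI : ∀ h ∈ pathFlows od Q μ, 0 ≤ ∑ p, ∫ t, Ψ p t * (h p t - hstar p t) ∂μ)
    {p q : ι} (hpq : od q = od p) {B : Set α} (hB : MeasurableSet B) (hB₀ : μ B ≠ 0) {x : ℝ}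
    (hBx : ∀ t ∈ B, Ψ q t ≤ x) :
    ∫ t, Ψ p t * hstar p t ∂μ ≤ x * ∫ t, hstar p t ∂μ := by
  set m := ∫ t, hstar p t ∂μ
  have hm : 0 ≤ m := integral_nonneg_of_ae (hstar_mem.2.1 p)
  have hβ : μ.real B ≠ 0 := ENNReal.toReal_ne_zero.2 ⟨hB₀, measure_ne_top μ B⟩
  set a : α → ℝ := B.indicator fun _ => m / μ.real B
  have ha : MemLp a 2 μ := memLp_indicator_const 2 hB _ (Or.inr (measure_ne_top μ B))
  have ha₀ : 0 ≤ᵐ[μ] a := Filter.Eventually.of_forall fun t =>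
    indicator_nonneg (fun _ _ => div_nonneg hm measureReal_nonneg) t
  have ha_int : ∫ t, a t ∂μ = m := by
    rw [integral_indicator_const _ hB, smul_eq_mul]
    field_simp
  have hΨa : Integrable (fun t => Ψ q t * a t) μ := (hΨ q).integrable_mul ha
  have hcost : ∫ t, Ψ q t * a t ∂μ ≤ x * m := by
    rw [← ha_int, ← integral_const_mul]
    refine integral_mono hΨa ((ha.integrable one_le_two).const_mul x) fun t => ?_
    by_cases ht : t ∈ B
    · simp only [a, indicator_of_mem ht]
      exact mul_le_mul_of_nonneg_right (hBx t ht) (div_nonneg hm measureReal_nonneg)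
    · simp [a, indicator_of_notMem ht]
  have hVI_a := hVI _ (reroute_mem_pathFlows hstar_mem hpq ha ha₀ ha_int)
  rw [sum_integral_mul_reroute_sub hΨa ((hΨ p).integrable_mul (hstar_mem.1 p))] at hVI_a
  linarith

theorem isEquilibrium_of_variationalInequality [IsFiniteMeasure μ] {Ψ : ι → α → ℝ}
    (hΨmeas : ∀ p, Measurable (Ψ p)) (hΨ : ∀ p, MemLp (Ψ p) 2 μ) {v : W → ℝ}
    (hv : ∀ p, ∀ᵐ t ∂μ, v (od p) ≤ Ψ p t)
    (hcheap : ∀ p, ∃ q, od q = od p ∧ ∀ ε > 0, μ {t | Ψ q t < v (od p) + ε} ≠ 0)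
    {hstar : ι → α → ℝ} (hstar_mem : hstar ∈ pathFlows od Q μ)
    (hVI : ∀ h ∈ pathFlows od Q μ, 0 ≤ ∑ p, ∫ t, Ψ p t * (h p t - hstar p t) ∂μ) (p : ι) :
    ∀ᵐ t ∂μ, 0 < hstar p t → Ψ p t = v (od p) := by
  obtain ⟨q, hpq, hq⟩ := hcheap p
  set g : α → ℝ := fun t => (Ψ p t - v (od p)) * hstar p t
  have hg₀ : 0 ≤ᵐ[μ] g := by
    filter_upwards [hv p, hstar_mem.2.1 p] with t hΨt hht
    exact mul_nonneg (sub_nonneg.2 hΨt) hht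
  have hg_int : Integrable g μ := ((hΨ p).sub (memLp_const _)).integrable_mul (hstar_mem.1 p)
  have hΨh : Integrable (fun t => Ψ p t * hstar p t) μ := (hΨ p).integrable_mul (hstar_mem.1 p)
  have hg_le : ∀ ε > 0, ∫ t, g t ∂μ ≤ ε * ∫ t, hstar p t ∂μ := fun ε hε => by
    have := integral_mul_le_of_variationalInequality hΨ hstar_mem hVI hpq
      (measurableSet_lt (hΨmeas q) measurable_const) (hq ε hε) fun t ht => le_of_lt ht
    have hsplit : ∫ t, g t ∂μ = ∫ t, Ψ p t * hstar p t ∂μ - v (od p) * ∫ t, hstar p t ∂μ := by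
      rw [← integral_const_mul,
        ← integral_sub hΨh (((hstar_mem.1 p).integrable one_le_two).const_mul _)]
      simp only [g, sub_mul]
    linarith
  have hg_zero : ∫ t, g t ∂μ = 0 := le_antisymm
    (nonpos_of_forall_pos_le_mul (integral_nonneg_of_ae (hstar_mem.2.1 p)) hg_le)
    (integral_nonneg_of_ae hg₀)
  filter_upwards [(integral_eq_zero_iff_of_nonneg_ae hg₀ hg_int).1 hg_zero] with t hgt hpos
  have := (mul_eq_zero.1 hgt).resolve_right hpos.ne'
  linarith

end PathFlows

section MinCost

variable {ι W : Type*} [Finite ι] {od : ι → W} {Ψ : ι → α → ℝ}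

noncomputable def minCost (od : ι → W) (Ψ : ι → α → ℝ) (μ : Measure α) (w : W) : ℝ :=
  ⨅ p : {p : ι // od p = w}, essInf (Ψ p) μ

theorem minCost_le_ae (hΨ : ∀ p, Filter.IsBoundedUnder (· ≥ ·) (ae μ) (Ψ p)) (p : ι) :
    ∀ᵐ t ∂μ, minCost od Ψ μ (od p) ≤ Ψ p t :=
  (ae_essInf_le (hΨ p)).mono fun _ ht =>
    (ciInf_le (Finite.bddBelow_range _) (⟨p, rfl⟩ : {q : ι // od q = od p})).trans ht

theorem exists_measure_lt_minCost_add_ne_zero [NeZero μ] (p : ι) :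
    ∃ q, od q = od p ∧ ∀ ε > 0, μ {t | Ψ q t < minCost od Ψ μ (od p) + ε} ≠ 0 := by
  have : Nonempty {q : ι // od q = od p} := ⟨⟨p, rfl⟩⟩
  obtain ⟨q, hq⟩ := exists_eq_ciInf_of_finite (f := fun q : {q : ι // od q = od p} =>
    essInf (Ψ q) μ)
  refine ⟨q, q.2, fun ε hε => ?_⟩
  rw [minCost, ← hq]
  exact measure_lt_essInf_add_ne_zero _ hε

end MinCost

end Measure

theorem stmt0_general
    {ι W : Type*} [Fintype ι] [Fintype W] [DecidableEq W]
    (od : ι → W)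
    (t₀ t_f : ℝ) (ht : t₀ < t_f)
    (Q : W → ℝ)
    (μ : Measure ℝ) (hμ : μ = volume.restrict (Icc t₀ t_f))
    (Λ : Set (ι → ℝ → ℝ))
    (hΛ : Λ = {h : ι → ℝ → ℝ |
      (∀ p, MemLp (h p) 2 μ) ∧ (∀ p, 0 ≤ᵐ[μ] h p) ∧
      (∀ w, ∑ p ∈ Finset.univ.filter (fun p => od p = w), ∫ t, h p t ∂μ = Q w)})
    (Ψ : (ι → ℝ → ℝ) → ι → ℝ → ℝ)
    (hΨmeas : ∀ h ∈ Λ, ∀ p, Measurable (Ψ h p))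
    (hΨpos : ∀ h ∈ Λ, ∀ p, ∃ c > 0, ∀ᵐ t ∂μ, c ≤ Ψ h p t)
    (hΨL2 : ∀ h ∈ Λ, ∀ p, MemLp (Ψ h p) 2 μ)
    (hstar : ι → ℝ → ℝ) (hmem : hstar ∈ Λ)
    (v : W → ℝ)
    (hv : ∀ w, v w = ⨅ p : {p : ι // od p = w}, essInf (Ψ hstar p.1) μ) :
    (∀ p, ∀ᵐ t ∂μ, 0 < hstar p t → Ψ hstar p t = v (od p)) ↔
      (∀ h ∈ Λ, 0 ≤ ∑ p : ι, ∫ t, Ψ hstar p t * (h p t - hstar p t) ∂μ) := by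
  classical
  have : IsFiniteMeasure μ := hμ ▸ inferInstance
  have : NeZero μ := ⟨by simp [hμ, Measure.restrict_eq_zero, ht]⟩
  obtain rfl : v = minCost od (Ψ hstar) μ := funext hv
  have hbdd (p : ι) : Filter.IsBoundedUnder (· ≥ ·) (ae μ) (Ψ hstar p) :=
    let ⟨c, _, hc⟩ := hΨpos hstar hmem p; ⟨c, hc⟩
  have hv_le : ∀ p, ∀ᵐ t ∂μ, minCost od (Ψ hstar) μ (od p) ≤ Ψ hstar p t := minCost_le_ae hbdd
  subst hΛ
  exact ⟨fun heq _ hh => variationalInequality_of_isEquilibrium (hΨL2 hstar hmem) hv_le hmem heq hh,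
    isEquilibrium_of_variationalInequality (hΨmeas hstar hmem) (hΨL2 hstar hmem) hv_le
      exists_measure_lt_minCost_add_ne_zero hmem⟩

/-- A feasible path departure vector `hstar` is a dynamic user equilibrium iff it solves the
variational inequality. -/
theorem stmt0
    {ι W : Type*} [Fintype ι] [Fintype W] [DecidableEq W]
    (od : ι → W) (hod : ∀ w, ∃ p, od p = w)
    (t₀ t_f : ℝ) (ht : t₀ < t_f)
    (Q : W → ℝ) (hQ : ∀ w, 0 < Q w)
    (μ : Measure ℝ) (hμ : μ = volume.restrict (Icc t₀ t_f))
    (Λ : Set (ι → ℝ → ℝ))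
    (hΛ : Λ = {h : ι → ℝ → ℝ |
      (∀ p, MemLp (h p) 2 μ) ∧ (∀ p, 0 ≤ᵐ[μ] h p) ∧
      (∀ w, ∑ p ∈ Finset.univ.filter (fun p => od p = w), ∫ t, h p t ∂μ = Q w)})
    (Ψ : (ι → ℝ → ℝ) → ι → ℝ → ℝ)
    (hΨmeas : ∀ h ∈ Λ, ∀ p, Measurable (Ψ h p))
    (hΨpos : ∀ h ∈ Λ, ∀ p, ∃ c > 0, ∀ᵐ t ∂μ, c ≤ Ψ h p t)
    (hΨL2 : ∀ h ∈ Λ, ∀ p, MemLp (Ψ h p) 2 μ)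
    (hstar : ι → ℝ → ℝ) (hmem : hstar ∈ Λ)
    (v : W → ℝ)
    (hv : ∀ w, v w = ⨅ p : {p : ι // od p = w}, essInf (Ψ hstar p.1) μ) :
    (∀ p, ∀ᵐ t ∂μ, 0 < hstar p t → Ψ hstar p t = v (od p)) ↔
      (∀ h ∈ Λ, 0 ≤ ∑ p : ι, ∫ t, Ψ hstar p t * (h p t - hstar p t) ∂μ) :=
  stmt0_general od t₀ t_f ht Q μ hμ Λ hΛ Ψ hΨmeas hΨpos hΨL2 hstar hmem v hv
end

section
/- For the point-queue dynamic at an origin, dq/dt = Σ_{p∈P^o} h_p(t) − min{D_o(t), S_j(t)}, where D_o(t) = M (a constant exceeding S_j) when q(t) > 0 and D_o(t) = Σ_p h_p(t) when q(t) = 0, any absolutely continuous solution with q(t₀) = 0 satisfies q(t) ≥ 0 for all t ∈ [t₀, t_f]. -/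
open Set MeasureTheory

/-- Any absolutely continuous solution of the point-queue dynamic at an origin, starting from
an empty queue, remains nonnegative. -/
theorem stmt9 {P : Type*} [Fintype P]
    (t₀ t_f : ℝ) (ht : t₀ < t_f)
    (h : P → ℝ → ℝ) (hh : ∀ p t, 0 ≤ h p t)
    (Cj M : ℝ) (S : ℝ → ℝ) (hSm : Measurable S)
    (hS : ∀ t, 0 ≤ S t ∧ S t ≤ Cj) (hM : Cj < M)
    (q g : ℝ → ℝ)
    (hg : IntervalIntegrable g volume t₀ t_f)
    (hq : ∀ t ∈ Icc t₀ t_f, q t = ∫ s in t₀..t, g s)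
    (hode : ∀ᵐ s ∂(volume.restrict (Icc t₀ t_f)),
      g s = (∑ p, h p s) - min (if 0 < q s then M else ∑ p, h p s) (S s)) :
    ∀ t ∈ Icc t₀ t_f, 0 ≤ q t := by
  -- continuity of q on [t₀, t_f]
  have huIcc : uIcc t₀ t_f = Icc t₀ t_f := uIcc_of_le ht.le
  have hcont : ContinuousOn q (Icc t₀ t_f) := by
    have := intervalIntegral.continuousOn_primitive_interval' hg
      (by rw [huIcc]; exact ⟨le_rfl, ht.le⟩)
    rw [huIcc] at this
    exact this.congr hq
  intro t htmem
  by_contra hneg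
  push_neg at hneg
  -- the set of times ≤ t where q is nonnegative
  set A : Set ℝ := {s ∈ Icc t₀ t | 0 ≤ q s} with hA
  have hq0 : q t₀ = 0 := by
    rw [hq t₀ ⟨le_rfl, ht.le⟩, intervalIntegral.integral_same]
  have ht₀A : t₀ ∈ A := ⟨⟨le_rfl, htmem.1⟩, hq0.ge⟩
  have hAne : A.Nonempty := ⟨t₀, ht₀A⟩
  have hAbdd : BddAbove A := ⟨t, fun s hs => hs.1.2⟩
  set T := sSup A with hT
  have hTt : T ≤ t := csSup_le hAne fun s hs => hs.1.2
  have ht₀T : t₀ ≤ T := le_csSup hAbdd ht₀A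
  have hsubt : Icc t₀ t ⊆ Icc t₀ t_f := Icc_subset_Icc le_rfl htmem.2
  -- A is closed
  have hAclosed : IsClosed A := by
    have : A = Icc t₀ t ∩ q ⁻¹' (Ici 0) := by
      ext s; simp [hA, mem_preimage, mem_Ici]
    rw [this]
    exact (hcont.mono hsubt).preimage_isClosed_of_isClosed isClosed_Icc isClosed_Ici
  have hTA : T ∈ A := hAclosed.csSup_mem hAne hAbdd
  have hqT : 0 ≤ q T := hTA.2
  have hTlt : T < t := hTt.lt_of_ne fun heq => absurd (heq ▸ hqT) (not_le.mpr hneg)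
  -- on (T, t], q < 0
  have hqneg : ∀ s ∈ Ioc T t, q s < 0 := by
    intro s hs
    by_contra hns
    push_neg at hns
    exact absurd (le_csSup hAbdd ⟨⟨ht₀T.trans hs.1.le, hs.2⟩, hns⟩) (not_le.mpr hs.1)
  -- hence g ≥ 0 a.e. on (T, t]
  have hIocsub : Ioc T t ⊆ Icc t₀ t_f := fun s hs =>
    ⟨ht₀T.trans hs.1.le, hs.2.trans htmem.2⟩
  have hode' : ∀ᵐ s ∂(volume.restrict (Ioc T t)),
      g s = (∑ p, h p s) - min (if 0 < q s then M else ∑ p, h p s) (S s) :=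
    ae_restrict_of_ae_restrict_of_subset hIocsub hode
  have hgnn : ∀ᵐ s ∂(volume.restrict (Ioc T t)), 0 ≤ g s := by
    have hmem : ∀ᵐ s ∂(volume.restrict (Ioc T t)), s ∈ Ioc T t :=
      ae_restrict_mem measurableSet_Ioc
    filter_upwards [hode', hmem] with s hgs hs
    rw [hgs, if_neg (not_lt.mpr (hqneg s hs).le)]
    have : min (∑ p, h p s) (S s) ≤ ∑ p, h p s := min_le_left _ _
    linarith
  -- g is interval integrable on [T, t]
  have hgint : IntervalIntegrable g volume T t :=
    hg.mono_set (by rw [huIcc, uIcc_of_le hTlt.le]; exact Icc_subset_Icc ht₀T (htmem.2))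
  have hint : 0 ≤ ∫ s in T..t, g s := by
    rw [intervalIntegral.integral_of_le hTlt.le]
    exact setIntegral_nonneg_ae measurableSet_Ioc
      ((ae_restrict_iff' measurableSet_Ioc).mp hgnn)
  -- conclude
  have hgT : IntervalIntegrable g volume t₀ T :=
    hg.mono_set (by rw [huIcc, uIcc_of_le ht₀T]; exact Icc_subset_Icc le_rfl (hTt.trans htmem.2))
  have hqt : q t = q T + ∫ s in T..t, g s := by
    rw [hq t htmem, hq T ⟨ht₀T, hTt.trans htmem.2⟩,
      ← intervalIntegral.integral_add_adjacent_intervals hgT hgint]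
  linarith
end

section
/- The solution of the minimum-norm projection subproblem in the fixed-point algorithm has the explicit form: given g ∈ (L²[t₀,t_f])^{|P|}, the projection of g onto Λ is given componentwise by (P_Λ[g])_p(t) = [g_p(t) + v_ij]₊ for p ∈ P_ij, where for each O-D pair (i,j) the scalar v_ij is chosen so that Σ_{p∈P_ij} ∫_{t₀}^{t_f} [g_p(t) + v_ij]₊ dt = Q_ij. -/
/-!
The map `c ↦ ∑_{p ∈ P_w} ∫ [g_p + c]₊` is continuous, tends to `0` at `-∞` and to `+∞` at `+∞`,
so the intermediate value theorem gives a threshold `v_w` meeting each demand `Q_w > 0`.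
For `s_p = [g_p + v_{w(p)}]₊` and any `x ≥ 0` one has the pointwise inequality
`(x - s)² + (s - g)² + 2 v (x - s) ≤ (x - g)²`; integrating and summing, the terms `v_w (∫ h - ∫ s)`
cancel on each fibre because `h` and `s` meet the same demands. This Pythagorean inequality
`‖h - s‖² + ‖s - g‖² ≤ ‖h - g‖²` gives both minimality and uniqueness of `s`.
-/

open Set MeasureTheory Filter Topology

section Threshold

variable {α : Type*} [MeasurableSpace α] {μ : Measure α} {f : α → ℝ}

lemma lipschitzWith_integral_max_add [IsFiniteMeasure μ] (hf : Integrable f μ) :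
    LipschitzWith (μ.real univ).toNNReal (fun c => ∫ t, max (f t + c) 0 ∂μ) := by
  have hint : ∀ c, Integrable (fun t => max (f t + c) 0) μ := fun c =>
    (hf.add (integrable_const c)).pos_part
  refine LipschitzWith.of_dist_le_mul fun a b => ?_
  rw [Real.dist_eq, Real.dist_eq, Real.coe_toNNReal _ measureReal_nonneg, mul_comm,
    ← integral_sub (hint a) (hint b)]
  refine (Real.norm_eq_abs _).symm.trans_le
    (norm_integral_le_of_norm_le_const (Eventually.of_forall fun t => ?_))
  calc ‖max (f t + a) 0 - max (f t + b) 0‖ ≤ |(f t + a) - (f t + b)| :=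
        abs_max_sub_max_le_abs _ _ _
    _ = |a - b| := by ring_nf

lemma tendsto_integral_max_add_atBot (hf : Integrable f μ) :
    Tendsto (fun c => ∫ t, max (f t + c) 0 ∂μ) atBot (𝓝 0) := by
  have hlim : Tendsto (fun c => ∫ t, max (f t + c) 0 ∂μ) atBot (𝓝 (∫ _t, (0 : ℝ) ∂μ)) := by
    refine tendsto_integral_filter_of_dominated_convergence (fun t => max (f t) 0)
      (Eventually.of_forall fun c => by fun_prop)
      ?_ hf.pos_part (Eventually.of_forall fun t => ?_)
    · filter_upwards [eventually_le_atBot 0] with c hc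
      refine Eventually.of_forall fun t => ?_
      rw [Real.norm_eq_abs, abs_of_nonneg (le_max_right _ _)]
      exact max_le_max (by linarith) le_rfl
    · refine tendsto_const_nhds.congr' ?_
      filter_upwards [eventually_le_atBot (-f t)] with c hc
      rw [max_eq_right (by linarith)]
  simpa using hlim

lemma integral_add_le_integral_max_add [IsFiniteMeasure μ] (hf : Integrable f μ) (c : ℝ) :
    ∫ t, f t ∂μ + μ.real univ * c ≤ ∫ t, max (f t + c) 0 ∂μ := by
  rw [← smul_eq_mul, ← integral_const, ← integral_add hf (integrable_const c)]
  exact integral_mono (hf.add (integrable_const c)) (hf.add (integrable_const c)).pos_part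
    fun t => le_max_left _ _

lemma tendsto_integral_max_add_atTop [IsFiniteMeasure μ] [NeZero μ] (hf : Integrable f μ) :
    Tendsto (fun c => ∫ t, max (f t + c) 0 ∂μ) atTop atTop :=
  tendsto_atTop_mono (integral_add_le_integral_max_add hf) <|
    tendsto_atTop_add_const_left _ _ (tendsto_id.const_mul_atTop measureReal_univ_pos)

lemma exists_sum_integral_max_add_eq [IsFiniteMeasure μ] [NeZero μ] {ι : Type*}
    {s : Finset ι} (hs : s.Nonempty) {f : ι → α → ℝ} (hf : ∀ p ∈ s, Integrable (f p) μ)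
    {Q : ℝ} (hQ : 0 < Q) : ∃ c, ∑ p ∈ s, ∫ t, max (f p t + c) 0 ∂μ = Q := by
  set F : ℝ → ℝ := fun c => ∑ p ∈ s, ∫ t, max (f p t + c) 0 ∂μ
  have hcont : Continuous F :=
    continuous_finsetSum _ fun p hp => (lipschitzWith_integral_max_add (hf p hp)).continuous
  have hbot : Tendsto F atBot (𝓝 0) := by
    simpa using tendsto_finsetSum s fun p hp => tendsto_integral_max_add_atBot (hf p hp)
  obtain ⟨p, hp⟩ := hs
  have htop : Tendsto F atTop atTop := by
    refine tendsto_atTop_mono (fun c => ?_) (tendsto_integral_max_add_atTop (hf p hp))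
    exact Finset.single_le_sum (f := fun q => ∫ t, max (f q t + c) 0 ∂μ)
      (fun q _ => integral_nonneg fun t => le_max_right _ _) hp
  obtain ⟨a, ha⟩ := (hbot.eventually (eventually_le_nhds hQ)).exists
  obtain ⟨b, hb⟩ := (htop.eventually (eventually_ge_atTop Q)).exists
  exact intermediate_value_univ a b hcont ⟨ha, hb⟩

end Threshold

section Projection

variable {α : Type*} [MeasurableSpace α] {μ : Measure α}

lemma sq_sub_max_add_sq_add_mul_le {x a c : ℝ} (hx : 0 ≤ x) :
    (x - max (a + c) 0) ^ 2 + (max (a + c) 0 - a) ^ 2 + 2 * c * (x - max (a + c) 0) ≤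
      (x - a) ^ 2 := by
  rcases le_total 0 (a + c) with h | h
  · rw [max_eq_left h]
    nlinarith
  · rw [max_eq_right h]
    nlinarith

lemma integral_sq_sub_max_add_sq_add_mul_le [IsFiniteMeasure μ] {g h : α → ℝ}
    (hg : MemLp g 2 μ) (hh : MemLp h 2 μ) (hh0 : 0 ≤ᵐ[μ] h) (c : ℝ) :
    ∫ t, (h t - max (g t + c) 0) ^ 2 ∂μ + ∫ t, (max (g t + c) 0 - g t) ^ 2 ∂μ +
        2 * c * (∫ t, h t ∂μ - ∫ t, max (g t + c) 0 ∂μ) ≤ ∫ t, (h t - g t) ^ 2 ∂μ := by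
  have hs : MemLp (fun t => max (g t + c) 0) 2 μ := (hg.add (memLp_const c)).pos_part
  have hhs : Integrable (fun t => (h t - max (g t + c) 0) ^ 2) μ := (hh.sub hs).integrable_sq
  have hsg : Integrable (fun t => (max (g t + c) 0 - g t) ^ 2) μ := (hs.sub hg).integrable_sq
  have hlin : Integrable (fun t => 2 * c * (h t - max (g t + c) 0)) μ :=
    ((hh.integrable one_le_two).sub (hs.integrable one_le_two)).const_mul (2 * c)
  have hsum : Integrable (fun t => (h t - max (g t + c) 0) ^ 2 + (max (g t + c) 0 - g t) ^ 2) μ :=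
    hhs.add hsg
  rw [← integral_sub (hh.integrable one_le_two) (hs.integrable one_le_two),
    ← integral_const_mul, ← integral_add hhs hsg, ← integral_add hsum hlin]
  refine integral_mono_ae (hsum.add hlin) (hh.sub hg).integrable_sq ?_
  filter_upwards [hh0] with t ht
  exact sq_sub_max_add_sq_add_mul_le ht

lemma sum_mul_comp_eq_zero {ι W : Type*} [Fintype W] [DecidableEq W] (s : Finset ι)
    (od : ι → W) (v : W → ℝ) (a : ι → ℝ) (ha : ∀ w, ∑ p ∈ s with od p = w, a p = 0) :
    ∑ p ∈ s, v (od p) * a p = 0 := by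
  rw [← Finset.sum_fiberwise s od]
  refine Finset.sum_eq_zero fun w _ => ?_
  rw [Finset.sum_congr rfl fun p hp => by rw [(Finset.mem_filter.1 hp).2], ← Finset.mul_sum,
    ha w, mul_zero]

lemma sum_integral_sq_sub_max_add_add_le [IsFiniteMeasure μ] {ι W : Type*} [Fintype ι]
    [Fintype W] [DecidableEq W] (od : ι → W) (v : W → ℝ) {g h : ι → α → ℝ}
    (hg : ∀ p, MemLp (g p) 2 μ) (hh : ∀ p, MemLp (h p) 2 μ) (hh0 : ∀ p, 0 ≤ᵐ[μ] h p)
    (hdemand : ∀ w, ∑ p ∈ Finset.univ.filter (fun p => od p = w), ∫ t, h p t ∂μ =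
      ∑ p ∈ Finset.univ.filter (fun p => od p = w), ∫ t, max (g p t + v (od p)) 0 ∂μ) :
    ∑ p, ∫ t, (h p t - max (g p t + v (od p)) 0) ^ 2 ∂μ +
        ∑ p, ∫ t, (max (g p t + v (od p)) 0 - g p t) ^ 2 ∂μ ≤
      ∑ p, ∫ t, (h p t - g p t) ^ 2 ∂μ := by
  have hcancel : ∑ p, v (od p) * (∫ t, h p t ∂μ - ∫ t, max (g p t + v (od p)) 0 ∂μ) = 0 :=
    sum_mul_comp_eq_zero _ od v _ fun w => by rw [Finset.sum_sub_distrib, hdemand w, sub_self]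
  have hle := Finset.sum_le_sum fun p (_ : p ∈ Finset.univ) =>
    integral_sq_sub_max_add_sq_add_mul_le (hg p) (hh p) (hh0 p) (v (od p))
  simp only [Finset.sum_add_distrib, mul_assoc, ← Finset.mul_sum, hcancel] at hle
  linarith

lemma ae_eq_of_sum_integral_sq_sub_nonpos {ι : Type*} [Fintype ι] {f g : ι → α → ℝ}
    (hf : ∀ p, MemLp (f p) 2 μ) (hg : ∀ p, MemLp (g p) 2 μ)
    (hle : ∑ p, ∫ t, (f p t - g p t) ^ 2 ∂μ ≤ 0) (p : ι) : f p =ᵐ[μ] g p := by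
  have hnonneg : ∀ q, 0 ≤ ∫ t, (f q t - g q t) ^ 2 ∂μ := fun q =>
    integral_nonneg fun t => sq_nonneg _
  have hzero : ∫ t, (f p t - g p t) ^ 2 ∂μ = 0 :=
    (Finset.sum_eq_zero_iff_of_nonneg fun q _ => hnonneg q).1
      (le_antisymm hle (Finset.sum_nonneg fun q _ => hnonneg q)) p (Finset.mem_univ p)
  filter_upwards [(integral_eq_zero_iff_of_nonneg (fun t => sq_nonneg (f p t - g p t))
    ((hf p).sub (hg p)).integrable_sq).1 hzero] with t ht
  exact sub_eq_zero.1 (pow_eq_zero_iff two_ne_zero |>.1 ht)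

end Projection

/-- Explicit form of the minimum-norm projection onto `Λ`: the projection of `g` is given
componentwise by `[g_p(t) + v_ij]₊` where the scalars `v_ij` are chosen to meet the demand
constraints; such `v_ij` exist and produce the unique minimizer. -/
theorem stmt17 {ι W : Type*} [Fintype ι] [Fintype W] [DecidableEq W]
    (od : ι → W) (hod : ∀ w, ∃ p, od p = w)
    (t₀ t_f : ℝ) (ht : t₀ < t_f)
    (Q : W → ℝ) (hQ : ∀ w, 0 < Q w)
    (μ : Measure ℝ) (hμ : μ = volume.restrict (Icc t₀ t_f))
    (Λ : Set (ι → ℝ → ℝ))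
    (hΛ : Λ = {h : ι → ℝ → ℝ | (∀ p, MemLp (h p) 2 μ) ∧ (∀ p, 0 ≤ᵐ[μ] h p) ∧
      ∀ w, ∑ p ∈ Finset.univ.filter (fun p => od p = w), ∫ t, h p t ∂μ = Q w})
    (g : ι → ℝ → ℝ) (hg : ∀ p, MemLp (g p) 2 μ) :
    ∃ v : W → ℝ,
      (∀ w, ∑ p ∈ Finset.univ.filter (fun p => od p = w),
        ∫ t, max (g p t + v w) 0 ∂μ = Q w) ∧
      (fun p t => max (g p t + v (od p)) 0) ∈ Λ ∧
      (∀ h ∈ Λ,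
        ∑ p : ι, ∫ t, (max (g p t + v (od p)) 0 - g p t) ^ 2 ∂μ ≤
          ∑ p : ι, ∫ t, (h p t - g p t) ^ 2 ∂μ) ∧
      (∀ h ∈ Λ,
        (∑ p : ι, ∫ t, (h p t - g p t) ^ 2 ∂μ =
          ∑ p : ι, ∫ t, (max (g p t + v (od p)) 0 - g p t) ^ 2 ∂μ) →
        ∀ p, h p =ᵐ[μ] fun t => max (g p t + v (od p)) 0) := by
  subst hΛ
  have : IsFiniteMeasure μ := hμ ▸ inferInstance
  have : NeZero μ := ⟨fun h0 =>
    not_lt.2 (by simpa [hμ, Real.volume_Icc] using congrArg (· univ) h0) ht⟩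
  choose v hv using fun w => exists_sum_integral_max_add_eq
    ((hod w).imp fun p hp => Finset.mem_filter.2 ⟨Finset.mem_univ p, hp⟩)
    (fun p _ => (hg p).integrable one_le_two) (hQ w)
  have hsL2 : ∀ p, MemLp (fun t => max (g p t + v (od p)) 0) 2 μ := fun p =>
    ((hg p).add (memLp_const _)).pos_part
  have hsQ : ∀ w, ∑ p ∈ Finset.univ.filter (fun p => od p = w),
      ∫ t, max (g p t + v (od p)) 0 ∂μ = Q w := fun w => by
    rw [← hv w]
    exact Finset.sum_congr rfl fun p hp => by rw [(Finset.mem_filter.1 hp).2]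
  refine ⟨v, hv, ⟨hsL2, fun p => Eventually.of_forall fun t => le_max_right _ _, hsQ⟩, ?_, ?_⟩
  · rintro h ⟨hh, hh0, hhQ⟩
    have hpyth := sum_integral_sq_sub_max_add_add_le od v hg hh hh0 fun w =>
      (hhQ w).trans (hsQ w).symm
    have hnonneg : 0 ≤ ∑ p, ∫ t, (h p t - max (g p t + v (od p)) 0) ^ 2 ∂μ :=
      Finset.sum_nonneg fun p _ => integral_nonneg fun t => sq_nonneg _
    linarith
  · rintro h ⟨hh, hh0, hhQ⟩ heq
    have hpyth := sum_integral_sq_sub_max_add_add_le od v hg hh hh0 fun w =>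
      (hhQ w).trans (hsQ w).symm
    exact ae_eq_of_sum_integral_sq_sub_nonpos hh hsL2 (by linarith)
end
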